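/- arXiv:1604.01723 — 2 statements merged into one kernel-verified Lean document; each statement's English description precedes it below -/
import Mathlib

section
/- Let π ∈ S_n, let 𝓗 = (H_1, …, H_m) be a valid hook configuration of π, and let r ∈ {0, 1, …, m}. If Q_r(𝓗) = {π_{h_1}, π_{h_2}, …, π_{h_k}} with h_1 < h_2 < ⋯ < h_k, then π_{h_1} < π_{h_2} < ⋯ < π_{h_k}; that is, the entries assigned color c_r form an increasing subsequence of π. -/
open scoped Classical

namespace HookPaper

/-! ### Plane trees (ℕ-trees) -/

/-- A plane tree with labels in `α`: a root label together with a finite ordered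
list of subtrees. -/
inductive PTree (α : Type) : Type
  | node : α → List (PTree α) → PTree α

namespace PTree

variable {α : Type}

/-- The label of the root. -/
def label : PTree α → α
  | node a _ => a

/-- The postorder reading of a plane tree: read the subtrees of the root in
postorder from left to right, then read the root. -/
def postorder : PTree α → List α
  | node a ts => (ts.attach.map (fun t => postorder t.1)).flatten ++ [a]
decreasing_by
  have := List.sizeOf_lt_of_mem t.2
  simp only [PTree.node.sizeOf_spec]
  omega

/-- A labeled plane tree is decreasing if the label of every nonroot vertex is
smaller than the label of its parent. -/
inductive IsDecreasing : PTree ℕ → Prop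
  | node (a : ℕ) (ts : List (PTree ℕ)) :
      (∀ t ∈ ts, IsDecreasing t) → (∀ t ∈ ts, t.label < a) → IsDecreasing (node a ts)

/-- A plane tree is an `S`-tree if the number of children of every vertex lies in `S`. -/
inductive DegreesIn (S : Set ℕ) : PTree α → Prop
  | node (a : α) (ts : List (PTree α)) :
      (∀ t ∈ ts, DegreesIn S t) → ts.length ∈ S → DegreesIn S (node a ts)

/-- The number of vertices whose number of children lies in `R`. -/
noncomputable def countDeg (R : Set ℕ) : PTree α → ℕ
  | node _ ts =>
      (if ts.length ∈ R then 1 else 0) + ((ts.attach.map fun t => countDeg R t.1).sum)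
decreasing_by
  have := List.sizeOf_lt_of_mem t.2
  simp only [PTree.node.sizeOf_spec]
  omega

/-- Attach `x` as a new leftmost child of the (unique) vertex labeled `v`. -/
def attachLeft (x v : ℕ) : PTree ℕ → PTree ℕ
  | node a ts =>
      if a = v then node a (node x [] :: ts)
      else node a (ts.attach.map fun t => attachLeft x v t.1)
decreasing_by
  have := List.sizeOf_lt_of_mem t.2
  simp only [PTree.node.sizeOf_spec]
  omega

/-- The label of the parent of the (unique) vertex labeled `u`, if it exists. -/
def parentOf (u : ℕ) : PTree ℕ → Option ℕ
  | node a ts =>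
      if u ∈ ts.map label then some a
      else (ts.attach.map fun t => parentOf u t.1).foldr (fun o acc => o <|> acc) none
decreasing_by
  have := List.sizeOf_lt_of_mem t.2
  simp only [PTree.node.sizeOf_spec]
  omega

end PTree

/-- The number of (unlabeled) `S`-trees with `r` vertices. -/
noncomputable def Dcount (S : Set ℕ) (r : ℕ) : ℕ :=
  Nat.card {t : PTree Unit // PTree.DegreesIn S t ∧ (PTree.postorder t).length = r}

/-- `D_S(r; R, u)`: the number of (unlabeled) `S`-trees with `r` vertices, exactly `u`
of which have their number of children in `R`. -/
noncomputable def DcountRef (S R : Set ℕ) (r u : ℕ) : ℕ :=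
  Nat.card {t : PTree Unit //
    PTree.DegreesIn S t ∧ (PTree.postorder t).length = r ∧ PTree.countDeg R t = u}

/-! ### d-ary plane trees -/

/-- `d`-ary plane trees (for the intended arity `d`, enforced by `IsDAry`): either
empty, or a root together with a list of (possibly empty) subtrees. -/
inductive DTree (α : Type) : Type
  | empty : DTree α
  | node : α → List (DTree α) → DTree α

namespace DTree

variable {α : Type}

/-- The postorder reading: read the (nonempty) subtrees from left to right in
postorder, then the root.  The empty tree reads as the empty word. -/
def postorder : DTree α → List α
  | empty => []
  | node a ts => (ts.attach.map (fun t => postorder t.1)).flatten ++ [a]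
decreasing_by
  have := List.sizeOf_lt_of_mem t.2
  simp only [DTree.node.sizeOf_spec]
  omega

/-- The tree is `d`-ary: every vertex carries exactly `d` (possibly empty) subtrees. -/
inductive IsDAry (d : ℕ) : DTree α → Prop
  | empty : IsDAry d .empty
  | node (a : α) (ts : List (DTree α)) :
      (∀ t ∈ ts, IsDAry d t) → ts.length = d → IsDAry d (.node a ts)

def isEmpty : DTree α → Bool
  | empty => true
  | node _ _ => false

/-- The number of vertices whose number of nonempty children lies in `R`. -/
noncomputable def countDeg (R : Set ℕ) : DTree α → ℕ
  | empty => 0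
  | node _ ts =>
      (if ((ts.countP fun t => !t.isEmpty) : ℕ) ∈ R then 1 else 0) +
        ((ts.attach.map fun t => countDeg R t.1).sum)
decreasing_by
  have := List.sizeOf_lt_of_mem t.2
  simp only [DTree.node.sizeOf_spec]
  omega

/-- A labeled `d`-ary plane tree is decreasing if every nonroot label is smaller
than its parent's label. -/
inductive IsDecreasing : DTree ℕ → Prop
  | empty : IsDecreasing .empty
  | node (a : ℕ) (ts : List (DTree ℕ)) :
      (∀ t ∈ ts, IsDecreasing t) →
      (∀ t ∈ ts, ∀ b cs, t = DTree.node b cs → b < a) → IsDecreasing (.node a ts)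

end DTree

/-- `E_d(r)`: the number of (unlabeled) `d`-ary plane trees with `r` vertices. -/
noncomputable def Ecount (d r : ℕ) : ℕ :=
  Nat.card {t : DTree Unit // DTree.IsDAry d t ∧ (DTree.postorder t).length = r}

/-- `E_d(r; R, u)`: the number of (unlabeled) `d`-ary plane trees with `r` vertices,
exactly `u` of which have their number of nonempty children in `R`. -/
noncomputable def EcountRef (d : ℕ) (R : Set ℕ) (r u : ℕ) : ℕ :=
  Nat.card {t : DTree Unit //
    DTree.IsDAry d t ∧ (DTree.postorder t).length = r ∧ DTree.countDeg R t = u}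

/-! ### Permutations, descents, the stack-sorting map -/

variable {n : ℕ}

/-- `i` is a descent position of `π` (0-indexed): `π i > π (i+1)`. -/
def IsDescentAt (π : Equiv.Perm (Fin n)) (i : Fin n) : Prop :=
  ∃ j : Fin n, (j : ℕ) = (i : ℕ) + 1 ∧ π j < π i

/-- The number of descents of `π`. -/
noncomputable def descentCount (π : Equiv.Perm (Fin n)) : ℕ :=
  (Finset.univ.filter fun i : Fin n => IsDescentAt π i).card

/-- The number of valleys of `π`: positions whose entry is smaller than both
neighbors. -/
noncomputable def valleyCount (π : Equiv.Perm (Fin n)) : ℕ :=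
  (Finset.univ.filter fun i : Fin n =>
    ∃ i' i'' : Fin n, (i' : ℕ) + 1 = (i : ℕ) ∧ (i : ℕ) + 1 = (i'' : ℕ) ∧
      π i < π i' ∧ π i < π i'').card

/-- The word `π_1 π_2 ⋯ π_n` of the permutation, with entries in `{1, …, n}`. -/
def wordOf (π : Equiv.Perm (Fin n)) : List ℕ :=
  List.ofFn fun i : Fin n => (π i : ℕ) + 1

/-- The entry `π_i` (an element of `{1, …, n}`) at 0-indexed position `i : ℕ`
(junk value `0` if `i ≥ n`). -/
def ent (π : Equiv.Perm (Fin n)) (i : ℕ) : ℕ :=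
  if h : i < n then (π ⟨i, h⟩ : ℕ) + 1 else 0

lemma foldr_max_mem (a : ℕ) (l : List ℕ) : (a :: l).foldr max 0 ∈ a :: l := by
  induction l generalizing a with
  | nil => simp
  | cons b l ih =>
    have hb := ih b
    simp only [List.foldr_cons] at hb ⊢
    rcases max_cases a (max b (List.foldr max 0 l)) with ⟨h, _⟩ | ⟨h, _⟩
    · rw [h]; exact List.mem_cons_self
    · rw [h]; exact List.mem_cons_of_mem _ hb

/-- West's deterministic stack-sorting map on words: `s(∅) = ∅` and
`s(L n R) = s(L) s(R) n` where `n` is the largest entry. -/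
def sSort : List ℕ → List ℕ
  | [] => []
  | a :: l =>
      let m := (a :: l).foldr max 0
      let i := (a :: l).idxOf m
      sSort ((a :: l).take i) ++ sSort ((a :: l).drop (i + 1)) ++ [m]
termination_by l => l.length
decreasing_by
  · have hm : (a :: l).idxOf ((a :: l).foldr max 0) < (a :: l).length :=
      List.idxOf_lt_length_iff.2 (foldr_max_mem a l)
    simp only [List.length_take, List.length_cons] at *
    omega
  · simp only [List.length_drop, List.length_cons]
    omega

/-- The Narayana number `N(a, b) = (1/a) C(a,b) C(a,b-1)`. -/
def narayana (a b : ℕ) : ℕ := a.choose b * a.choose (b - 1) / a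

/-! ### Valid hook configurations -/

/-- A valid hook configuration of `π`.  A hook is recorded as the pair
(position of southwest endpoint, position of northeast endpoint), and the tuple
of hooks is listed in the order of their southwest endpoints. -/
structure VHC (n : ℕ) (π : Equiv.Perm (Fin n)) where
  /-- The list of hooks `H_1, …, H_m`, each recorded as (sw position, ne position). -/
  hooks : List (Fin n × Fin n)
  /-- Each entry really is a hook: `i < j` and `π i < π j`. -/
  isHook : ∀ h ∈ hooks, h.1 < h.2 ∧ π h.1 < π h.2
  /-- (a) the southwest endpoints have strictly increasing x-coordinates. -/
  swInc : (hooks.map Prod.fst).Pairwise (· < ·)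
  /-- (b) every descent point is a southwest endpoint of some hook. -/
  descSW : ∀ i : Fin n, IsDescentAt π i → ∃ h ∈ hooks, h.1 = i
  /-- (c.1) every northeast endpoint is the northeast endpoint of a hook whose
  southwest endpoint is a descent point. -/
  neDesc : ∀ h ∈ hooks, ∃ h' ∈ hooks, h'.2 = h.2 ∧ IsDescentAt π h'.1
  /-- (c.2) every northeast endpoint `(j, π_j)` is the northeast endpoint of a hook
  whose southwest endpoint is `(j-1, π_{j-1})`. -/
  nePrev : ∀ h ∈ hooks, ∃ h'' ∈ hooks, h''.2 = h.2 ∧ (h''.1 : ℕ) + 1 = (h.2 : ℕ)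
  /-- (d) if the x-projections of two hooks meet in more than one point and the first
  northeast endpoint is lower than the second, the first projection is contained
  in the second. -/
  nested : ∀ h ∈ hooks, ∀ h' ∈ hooks, π h.2 < π h'.2 →
      1 < (Finset.Icc h.1 h.2 ∩ Finset.Icc h'.1 h'.2).card →
      Finset.Icc h.1 h.2 ⊆ Finset.Icc h'.1 h'.2

namespace VHC

variable {π : Equiv.Perm (Fin n)}

/-- The (indices of) hooks whose top part lies weakly above the point `(k, π k)`:
hooks with sw strictly left of `k`, ne weakly right of `k`, and ne at least as high
as `π k`. -/
def cand (H : VHC n π) (k : Fin n) : Finset (Fin H.hooks.length) :=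
  Finset.univ.filter fun ℓ =>
    (H.hooks.get ℓ).1 < k ∧ k ≤ (H.hooks.get ℓ).2 ∧ π k ≤ π (H.hooks.get ℓ).2

/-- The color of the point `(k, π k)` in the diagram induced by `H`: among the hooks
whose top part lies above the point, take those of minimal height; among those, the
one with the largest index (this is the one with the rightmost southwest endpoint, and
for a northeast endpoint the largest applicable index).  Hook `H_ℓ` (`ℓ = 1, …, m`,
i.e. list index `ℓ-1`) gives color `ℓ`; if no hook lies above, the color is `0`. -/
noncomputable def color (H : VHC n π) (k : Fin n) : ℕ :=
  ((H.cand k).filter fun ℓ =>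
      ∀ ℓ' ∈ H.cand k, π (H.hooks.get ℓ).2 ≤ π (H.hooks.get ℓ').2).sup
    fun ℓ => (ℓ : ℕ) + 1

/-- The color at the 0-indexed position `i : ℕ` (junk value `0` if `i ≥ n`). -/
noncomputable def colorN (H : VHC n π) (i : ℕ) : ℕ :=
  if h : i < n then H.color ⟨i, h⟩ else 0

/-- The color class `Q_t(H)`, as a set of positions. -/
noncomputable def Qset (H : VHC n π) (t : ℕ) : Finset (Fin n) :=
  Finset.univ.filter fun k => H.color k = t

/-- `q_t(H)`, the size of the color class `Q_t(H)`. -/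
noncomputable def q (H : VHC n π) (t : ℕ) : ℕ := (H.Qset t).card

/-- `(j, π j)` is a northeast endpoint of a hook of `H`. -/
def isNE (H : VHC n π) (j : Fin n) : Prop := ∃ h ∈ H.hooks, h.2 = j

/-- `w_j(H)`: the number of hooks of `H` with northeast endpoint `(j, π j)`. -/
def w (H : VHC n π) (j : Fin n) : ℕ := (H.hooks.filter fun h => h.2 = j).length

/-- `H ∈ 𝓗_S(π)`: all the multiplicities `w_j(H)` lie in `S`. -/
def memS (H : VHC n π) (S : Set ℕ) : Prop := ∀ j : Fin n, H.w j ∈ S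

/-- `Θ(H)`: the set of colors `t ∈ {0, …, m}` not used on northeast endpoints. -/
noncomputable def Theta (H : VHC n π) : Finset ℕ :=
  (Finset.range (H.hooks.length + 1)).filter fun t => ¬ ∃ k : Fin n, H.isNE k ∧ H.color k = t

/-- `q̂_t(H) = q_{i_t}(H)` where `Θ(H) = {i_0 < i_1 < ⋯}`. -/
noncomputable def qhat (H : VHC n π) (t : ℕ) : ℕ :=
  H.q ((H.Theta.sort (· ≤ ·)).getD t 0)

/-! ### The tree-building procedure -/

/-- One step of the insertion procedure: insert the entry at 0-indexed position `ℓ`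
into the tree `τ`.  If `(ℓ, π_ℓ)` is the southwest endpoint of a hook with northeast
endpoint `(j, π_j)`, attach `π_ℓ` as the new leftmost child of `π_j`.  Otherwise let
`r` be the color of position `ℓ+1`, let `u ≤ ℓ` be the largest position of color `r`,
and attach `π_ℓ` as the new leftmost child of the parent of `π_u` in `T r`. -/
noncomputable def step (H : VHC n π) (T : ℕ → PTree ℕ) (ℓ : ℕ) (τ : PTree ℕ) : PTree ℕ :=
  match H.hooks.find? (fun h => (h.1 : ℕ) == ℓ) with
  | some h => PTree.attachLeft (ent π ℓ) (ent π (h.2 : ℕ)) τ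
  | none =>
      let r := H.colorN (ℓ + 1)
      let u := ((Finset.range (ℓ + 1)).filter fun u => H.colorN u = r).sup id
      match PTree.parentOf (ent π u) (T r) with
      | some v => PTree.attachLeft (ent π ℓ) v τ
      | none => τ

/-- The sequence of trees of the procedure: `tau H T s` is the tree `τ_{n-s}` of the
paper (1-indexed), i.e. the tree containing the entries at 0-indexed positions
`n-1-s, …, n-1`.  `tau H T 0` is the single vertex `π_n`. -/
noncomputable def tau (H : VHC n π) (T : ℕ → PTree ℕ) : ℕ → PTree ℕ
  | 0 => PTree.node (ent π (n - 1)) []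
  | s + 1 => H.step T (n - 1 - (s + 1)) (H.tau T s)

/-- The tree `g(𝓗, 𝓣) = τ_1` produced by the procedure. -/
noncomputable def g (H : VHC n π) (T : ℕ → PTree ℕ) : PTree ℕ := H.tau T (n - 1)

/-- `T` is a valid tuple `𝓣 = (T_0, …, T_m)` for `H`: for every color `t ∈ {0, …, m}`,
`T t` is a decreasing plane tree on `Q_t(H)` whose postorder lists the entries of
`Q_t(H)` in increasing order. -/
def goodTuple (H : VHC n π) (T : ℕ → PTree ℕ) : Prop :=
  ∀ t ≤ H.hooks.length,
    (T t).IsDecreasing ∧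
      PTree.postorder (T t) = ((H.Qset t).image fun k => ent π (k : ℕ)).sort (· ≤ ·)

end VHC

open VHC

/-- Lemma 2.1: the entries in a single color class of a valid hook
configuration form an increasing subsequence of `π`. -/
theorem color_class_increasing (n : ℕ) (π : Equiv.Perm (Fin n)) (H : VHC n π)
    (r : ℕ) (hr : r ≤ H.hooks.length) (k k' : Fin n)
    (hk : k ∈ H.Qset r) (hk' : k' ∈ H.Qset r) (hlt : k < k') :
    π k < π k' := by
  classical
  have hck : H.color k = r := (Finset.mem_filter.1 hk).2
  have hck' : H.color k' = r := (Finset.mem_filter.1 hk').2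
  by_contra hnot
  have hneq : π k ≠ π k' := fun h => absurd (π.injective h) (ne_of_lt hlt)
  have hlt' : π k' < π k := lt_of_le_of_ne (le_of_not_gt hnot) fun h => hneq h.symm
  set S : Finset (Fin n) := Finset.univ.filter (fun x => k ≤ x ∧ x < k' ∧ π k' < π x)
    with hSdef
  have hkS : k ∈ S := by
    simp only [hSdef, Finset.mem_filter, Finset.mem_univ, true_and]
    exact ⟨le_refl _, hlt, hlt'⟩
  have hSne : S.Nonempty := ⟨k, hkS⟩
  set i := S.max' hSne with hidef
  have hiS : i ∈ S := S.max'_mem hSne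
  have hmax : ∀ x ∈ S, x ≤ i := fun x hx => S.le_max' x hx
  obtain ⟨-, hki, hik', hπi⟩ :
      i ∈ Finset.univ ∧ k ≤ i ∧ i < k' ∧ π k' < π i := by
    simpa only [hSdef, Finset.mem_filter] using hiS
  have hi1 : (i : ℕ) + 1 < n := by
    have h1 : (i : ℕ) < (k' : ℕ) := hik'
    have h2 : (k' : ℕ) < n := k'.isLt
    omega
  set j' : Fin n := ⟨(i : ℕ) + 1, hi1⟩ with hj'def
  have hπj' : π j' < π i := by
    rcases eq_or_lt_of_le (show (j' : ℕ) ≤ (k' : ℕ) from hik') with heq | hltjk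
    · have : j' = k' := Fin.ext heq
      rw [this]; exact hπi
    · by_cases hc : π k' < π j'
      · have hj'S : j' ∈ S := by
          simp only [hSdef, Finset.mem_filter, Finset.mem_univ, true_and]
          refine ⟨?_, hltjk, hc⟩
          have : (k : ℕ) ≤ (i : ℕ) := hki
          exact Fin.le_def.2 (by simp [hj'def]; omega)
        have := hmax _ hj'S
        have : (j' : ℕ) ≤ (i : ℕ) := this
        simp [hj'def] at this
      · exact lt_of_le_of_lt (le_of_not_gt hc) hπi
  have hdesc : IsDescentAt π i := ⟨j', rfl, hπj'⟩
  obtain ⟨h', hmem', hsw'⟩ := H.descSW i hdesc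
  obtain ⟨hlt12, hπ12⟩ := H.isHook h' hmem'
  rw [hsw'] at hlt12 hπ12
  rcases lt_or_ge h'.2 k' with hcase | hcase
  · -- the NE endpoint of h' lies in [k, k'), contradicting maximality of i
    have hS2 : h'.2 ∈ S := by
      simp only [hSdef, Finset.mem_filter, Finset.mem_univ, true_and]
      exact ⟨le_of_lt (lt_of_le_of_lt hki hlt12), hcase, lt_trans hπi hπ12⟩
    exact absurd (hmax _ hS2) (not_le.2 hlt12)
  · -- the hook h' covers k'
    obtain ⟨ℓ'', hget⟩ := List.get_of_mem hmem'
    have hcand : ℓ'' ∈ H.cand k' := by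
      simp only [VHC.cand, Finset.mem_filter, Finset.mem_univ, true_and, hget, hsw']
      exact ⟨hik', hcase, le_of_lt (lt_trans hπi hπ12)⟩
    rcases Nat.eq_zero_or_pos r with hr0 | hrpos
    · -- r = 0 : but cand k' is nonempty, so the color is positive
      obtain ⟨ℓm, hℓm, hmin⟩ :=
        Finset.exists_min_image (H.cand k') (fun ℓ => π (H.hooks.get ℓ).2) ⟨ℓ'', hcand⟩
      have hF : ℓm ∈ (H.cand k').filter
          (fun ℓ => ∀ ℓ' ∈ H.cand k', π (H.hooks.get ℓ).2 ≤ π (H.hooks.get ℓ').2) :=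
        Finset.mem_filter.2 ⟨hℓm, hmin⟩
      have hle : (ℓm : ℕ) + 1 ≤ H.color k' := by
        simp only [VHC.color]
        exact Finset.le_sup (f := fun ℓ : Fin H.hooks.length => (ℓ : ℕ) + 1) hF
      rw [hck', hr0] at hle
      omega
    · -- r ≥ 1 : extract the hook of index r-1 responsible for both colors
      simp only [VHC.color] at hck hck'
      have hnek : ((H.cand k).filter
          (fun ℓ => ∀ ℓ' ∈ H.cand k, π (H.hooks.get ℓ).2 ≤ π (H.hooks.get ℓ').2)).Nonempty := by
        rw [Finset.nonempty_iff_ne_empty]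
        intro hemp
        rw [hemp, Finset.sup_empty] at hck
        simp at hck
        omega
      have hnek' : ((H.cand k').filter
          (fun ℓ => ∀ ℓ' ∈ H.cand k', π (H.hooks.get ℓ).2 ≤ π (H.hooks.get ℓ').2)).Nonempty := by
        rw [Finset.nonempty_iff_ne_empty]
        intro hemp
        rw [hemp, Finset.sup_empty] at hck'
        simp at hck'
        omega
      obtain ⟨b, hbF, hbsup⟩ := Finset.exists_mem_eq_sup _ hnek (fun ℓ => (ℓ : ℕ) + 1)
      obtain ⟨b', hb'F, hb'sup⟩ := Finset.exists_mem_eq_sup _ hnek' (fun ℓ => (ℓ : ℕ) + 1)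
      rw [hbsup] at hck
      rw [hb'sup] at hck'
      have hbb' : b = b' := Fin.ext (by omega)
      subst hbb'
      obtain ⟨hbk, -⟩ := Finset.mem_filter.1 hbF
      obtain ⟨hbk', hminb'⟩ := Finset.mem_filter.1 hb'F
      set hh := H.hooks.get b with hhdef
      obtain ⟨hh1k, -, -⟩ :
          hh.1 < k ∧ k ≤ hh.2 ∧ π k ≤ π hh.2 := by
        simpa only [VHC.cand, Finset.mem_filter, Finset.mem_univ, true_and] using hbk
      obtain ⟨-, hk'2, -⟩ :
          hh.1 < k' ∧ k' ≤ hh.2 ∧ π k' ≤ π hh.2 := by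
        simpa only [VHC.cand, Finset.mem_filter, Finset.mem_univ, true_and] using hbk'
      have hmemh : hh ∈ H.hooks := by
        rw [hhdef]
        exact H.hooks.get_mem b
      have hhlow : π hh.2 ≤ π h'.2 := by
        have := hminb' ℓ'' hcand
        rwa [hget] at this
      have hpair : ({i, k'} : Finset (Fin n)) ⊆
          Finset.Icc hh.1 hh.2 ∩ Finset.Icc h'.1 h'.2 := by
        intro x hx
        rcases Finset.mem_insert.1 hx with rfl | hx
        · refine Finset.mem_inter.2 ⟨Finset.mem_Icc.2 ⟨?_, ?_⟩, Finset.mem_Icc.2 ⟨?_, ?_⟩⟩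
          · exact le_of_lt (lt_of_lt_of_le hh1k hki)
          · exact le_of_lt (lt_of_lt_of_le hik' hk'2)
          · rw [hsw']
          · exact le_of_lt hlt12
        · rw [Finset.mem_singleton.1 hx]
          refine Finset.mem_inter.2 ⟨Finset.mem_Icc.2 ⟨?_, hk'2⟩, Finset.mem_Icc.2 ⟨?_, hcase⟩⟩
          · exact le_of_lt (lt_of_lt_of_le hh1k (le_of_lt hlt))
          · rw [hsw']; exact le_of_lt hik'
      have hcard : 1 < (Finset.Icc hh.1 hh.2 ∩ Finset.Icc h'.1 h'.2).card := by
        have h2 : ({i, k'} : Finset (Fin n)).card = 2 := Finset.card_pair (ne_of_lt hik')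
        have := Finset.card_le_card hpair
        omega
      have hhlow' : π hh.2 < π h'.2 := by
        rcases lt_or_eq_of_le hhlow with hl | heq
        · exact hl
        · exfalso
          have hF'' : ℓ'' ∈ (H.cand k').filter
              (fun ℓ => ∀ ℓ' ∈ H.cand k', π (H.hooks.get ℓ).2 ≤ π (H.hooks.get ℓ').2) := by
            refine Finset.mem_filter.2 ⟨hcand, fun ℓ' hℓ' => ?_⟩
            rw [hget, ← heq]
            exact hminb' ℓ' hℓ'
          have hle := Finset.le_sup (f := fun ℓ : Fin H.hooks.length => (ℓ : ℕ) + 1) hF''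
          rw [hb'sup] at hle
          have hle' : ℓ'' ≤ b := Fin.le_def.2 (by simp at hle; omega)
          rcases lt_or_eq_of_le hle' with hl | he
          · have hp : (H.hooks.get ℓ'').1 < (H.hooks.get b).1 := by
              have := List.pairwise_iff_get.1 H.swInc ⟨ℓ'', by simpa using ℓ''.isLt⟩
                ⟨b, by simpa using b.isLt⟩ (show (ℓ'' : ℕ) < b from hl)
              simpa using this
            rw [hget, ← hhdef, hsw'] at hp
            exact absurd (lt_trans hp (lt_of_lt_of_le hh1k hki)) (lt_irrefl _)
          · have hhe : h' = hh := by rw [← hget, hhdef, he]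
            rw [hhe] at hsw'
            rw [hsw'] at hh1k
            exact absurd (lt_of_lt_of_le hh1k hki) (lt_irrefl _)
      have hsub := H.nested hh hmemh h' hmem' hhlow' hcard
      have hmemI : hh.1 ∈ Finset.Icc hh.1 hh.2 :=
        Finset.mem_Icc.2 ⟨le_refl _, le_of_lt (H.isHook hh hmemh).1⟩
      have := Finset.mem_Icc.1 (hsub hmemI)
      rw [hsw'] at this
      exact absurd this.1 (not_le.2 (lt_of_lt_of_le hh1k hki))

end HookPaper
end

section
/- Let π ∈ S_n, let 𝓗 be a valid hook configuration of π, and suppose (j, π_j) ∈ NE(𝓗) is assigned the color c_t in the colored diagram of π induced by 𝓗. Then Q_t(𝓗) = {π_j} and q_t(𝓗) = 1. -/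
open scoped Classical

namespace HookPaper

/-! ### Permutations, descents, the stack-sorting map -/

variable {n : ℕ}

open VHC

/-- Remark 3.1: the color class of a northeast endpoint is a singleton. -/
theorem ne_color_class_singleton (n : ℕ) (π : Equiv.Perm (Fin n)) (H : VHC n π)
    (j : Fin n) (hNE : H.isNE j) (t : ℕ) (ht : H.color j = t) :
    H.Qset t = {j} ∧ H.q t = 1 := by
  classical
  subst ht
  -- the filtered candidate set defining the color
  set F : Fin n → Finset (Fin H.hooks.length) := fun k =>
    (H.cand k).filter fun ℓ =>
      ∀ ℓ' ∈ H.cand k, π (H.hooks.get ℓ).2 ≤ π (H.hooks.get ℓ').2 with hF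
  have hcolor : ∀ k, H.color k = (F k).sup fun ℓ => (ℓ : ℕ) + 1 := fun k => rfl
  -- obtain the `nePrev` hook for j
  obtain ⟨h, hh, hhj⟩ := hNE
  obtain ⟨h'', hh'', hne'', hsw''⟩ := H.nePrev h hh
  rw [hhj] at hne''; rw [hhj] at hsw''
  obtain ⟨ℓ1, hget1⟩ := List.get_of_mem hh''
  -- ℓ1 belongs to cand j
  have hcand1 : ℓ1 ∈ H.cand j := by
    have hlt : h''.1 < j := Fin.lt_iff_val_lt_val.2 (by omega)
    simp only [cand, Finset.mem_filter, Finset.mem_univ, true_and, hget1, hne'']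
    exact ⟨hlt, le_refl _, le_refl _⟩
  -- ℓ1 belongs to F j
  have hF1 : ℓ1 ∈ F j := by
    simp only [hF, Finset.mem_filter]
    refine ⟨hcand1, fun ℓ' hℓ' => ?_⟩
    rw [hget1, hne'']
    simp only [cand, Finset.mem_filter, Finset.mem_univ, true_and] at hℓ'
    exact hℓ'.2.2
  -- every hook in F j has NE endpoint j
  have hFj_ne : ∀ ℓ ∈ F j, (H.hooks.get ℓ).2 = j := by
    intro ℓ hℓ
    simp only [hF, Finset.mem_filter] at hℓ
    obtain ⟨hc, hmin⟩ := hℓ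
    have h1 : π j ≤ π (H.hooks.get ℓ).2 := by
      simp only [cand, Finset.mem_filter, Finset.mem_univ, true_and] at hc
      exact hc.2.2
    have h2 : π (H.hooks.get ℓ).2 ≤ π j := by
      have := hmin ℓ1 hcand1
      rwa [hget1, hne''] at this
    exact π.injective (le_antisymm h2 h1)
  have htpos : 0 < H.color j := by
    rw [hcolor j]
    exact lt_of_lt_of_le (Nat.succ_pos (ℓ1 : ℕ))
      (Finset.le_sup (f := fun ℓ : Fin H.hooks.length => (ℓ : ℕ) + 1) hF1)
  have hkey : ∀ k : Fin n, H.color k = H.color j → k = j := by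
    intro k hk
    by_contra hkj
    -- sup attained at j
    obtain ⟨ℓj, hℓj, hsupj⟩ :=
      Finset.exists_mem_eq_sup (F j) ⟨ℓ1, hF1⟩ (fun ℓ : Fin H.hooks.length => (ℓ : ℕ) + 1)
    -- F k nonempty since color k = color j > 0
    have hFk_ne : (F k).Nonempty := by
      by_contra hemp
      rw [Finset.not_nonempty_iff_eq_empty] at hemp
      rw [hcolor, hemp] at hk
      simp at hk; omega
    obtain ⟨ℓk, hℓk, hsupk⟩ :=
      Finset.exists_mem_eq_sup (F k) hFk_ne (fun ℓ : Fin H.hooks.length => (ℓ : ℕ) + 1)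
    have heq : ℓk = ℓj := by
      have h1 : (ℓk : ℕ) + 1 = H.color k := by rw [hcolor, hsupk]
      have h2 : (ℓj : ℕ) + 1 = H.color j := by rw [hcolor, hsupj]
      apply Fin.ext; omega
    -- properties from cand k
    have hck : ℓj ∈ H.cand k := by
      rw [← heq]
      simp only [hF, Finset.mem_filter] at hℓk
      exact hℓk.1
    simp only [cand, Finset.mem_filter, Finset.mem_univ, true_and] at hck
    have hnej : (H.hooks.get ℓj).2 = j := hFj_ne ℓj hℓj
    have hklt : k < j := lt_of_le_of_ne (hnej ▸ hck.2.1) hkj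
    -- ℓ1 ≤ ℓj
    have hle : (ℓ1 : ℕ) ≤ (ℓj : ℕ) := by
      have := Finset.le_sup (f := fun ℓ : Fin H.hooks.length => (ℓ : ℕ) + 1) hF1
      rw [hsupj] at this; simpa using this
    have hswlt : ((H.hooks.get ℓj).1 : ℕ) < (k : ℕ) := hck.1
    rcases eq_or_lt_of_le hle with hcase | hcase
    · -- ℓ1 = ℓj : sw at position j-1, but sw < k < j
      have : ℓ1 = ℓj := Fin.ext hcase
      rw [← this, hget1] at hswlt
      have := Fin.lt_iff_val_lt_val.1 hklt
      omega
    · -- ℓ1 < ℓj : sorted sw positions give j-1 < sw ℓj < k < j, contradiction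
      have hs := H.swInc
      have hrel := List.Pairwise.rel_get_of_lt hs
        (a := ⟨ℓ1, by simp⟩) (b := ⟨ℓj, by simp⟩) (by simpa using hcase)
      simp only [List.get_eq_getElem, List.getElem_map] at hrel
      have h1 : (H.hooks.get ℓ1).1 < (H.hooks.get ℓj).1 := by
        exact hrel
      rw [hget1] at h1
      have h1' := Fin.lt_iff_val_lt_val.1 h1
      have := Fin.lt_iff_val_lt_val.1 hklt
      omega
  have hQ : H.Qset (H.color j) = {j} := by
    ext k
    simp only [Qset, Finset.mem_filter, Finset.mem_univ, true_and, Finset.mem_singleton]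
    constructor
    · exact hkey k
    · rintro rfl; rfl
  exact ⟨hQ, by rw [q, hQ]; simp⟩

end HookPaper
end
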